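/- arXiv:1010.5859 — 5 statements merged into one kernel-verified Lean document; each statement's English description precedes it below -/
import Mathlib

section
/- Let f(x) = x/(e^x - 1) + x/2 in ℚ[s,t][[x]], and set A(s,t,x) = (f(x) - f(sx))·f(tx)/t. Then A(s,t,x) + A(t,s,x) = (x²/4)·{ 1 + 4e^x(e^{(s+t-1)x} - 1)/((e^x-1)(e^{sx}-1)(e^{tx}-1)) - (s+t-1)·(e^{sx}+1)(e^{tx}+1)/((e^{sx}-1)(e^{tx}-1)) }. -/
/-!
Write `E = e^x`, `E_s = e^{sx}`, `E_t = e^{tx}` and `E_r = e^{(s+t-1)x}`. Each of `f(x)`, `f(sx)`,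
`f(tx)` satisfies a linear relation `f(ax)·2(E_a - 1) = a x (E_a + 1)`, and `E·E_r = E_s·E_t`.
After clearing the denominators `s`, `t`, `4`, the identity is a consequence of these four
relations in any commutative ring, with an explicit certificate.
-/

open PowerSeries

noncomputable section

/-- The field `ℚ(s,t)` of rational functions in two variables `s = X 0`, `t = X 1`. -/
abbrev Frac2 : Type := FractionRing (MvPolynomial (Fin 2) ℚ)

/-- The image of `s` in `ℚ(s,t)`. -/
def sF : Frac2 := algebraMap (MvPolynomial (Fin 2) ℚ) Frac2 (MvPolynomial.X 0)

/-- The image of `t` in `ℚ(s,t)`. -/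
def tF : Frac2 := algebraMap (MvPolynomial (Fin 2) ℚ) Frac2 (MvPolynomial.X 1)

/-- Abstract form of the identity, with `F, Fs, Ft` standing for `f(x), f(sx), f(tx)`. -/
theorem getzler_identity_of_relations {R : Type*} [CommRing R] {F Fs Ft E Es Et Er X a b : R}
    (hF : F * (2 * (E - 1)) = X * (E + 1))
    (hFs : Fs * (2 * (Es - 1)) = a * X * (Es + 1))
    (hFt : Ft * (2 * (Et - 1)) = b * X * (Et + 1))
    (hE : E * Er = Es * Et) :
    4 * a * ((F - Fs) * Ft * ((E - 1) * (Es - 1) * (Et - 1)))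
        + 4 * b * ((F - Ft) * Fs * ((E - 1) * (Es - 1) * (Et - 1)))
      = a * b * (X ^ 2 * ((E - 1) * (Es - 1) * (Et - 1) + 4 * E * (Er - 1)
          - (a + b - 1) * (Es + 1) * (Et + 1) * (E - 1))) := by
  linear_combination (a * b * X * ((Et + 1) * (Es - 1) + (Es + 1) * (Et - 1))) * hF
    + (2 * b * (F - Ft) * (E - 1) * (Et - 1) - a * b * X * (Et + 1) * (E - 1)) * hFs
    + (2 * a * (F - Fs) * (E - 1) * (Es - 1) - a * b * X * (Es + 1) * (E - 1)) * hFt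
    - 4 * a * b * X ^ 2 * hE

theorem add_eq_of_four_mul_add_eq {R : Type*} [CommRing R] {a b a' b' q L₁ L₂ M : R}
    (ha : a * a' = 1) (hb : b * b' = 1) (hq : q * 4 = 1)
    (h : 4 * a * L₁ + 4 * b * L₂ = a * b * M) :
    L₁ * b' + L₂ * a' = q * M := by
  linear_combination a' * b' * q * h - (L₁ * b' + L₂ * a') * hq
    - (4 * q * L₁ * b' - q * M * b * b') * ha - 4 * q * L₂ * a' * hb + q * M * hb

theorem rescale_mul_two_mul_exp_sub_one {A : Type*} [CommRing A] [Algebra ℚ A] {F : A⟦X⟧}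
    (hF : F * (2 * (exp A - 1)) = X * (exp A + 1)) (a : A) :
    rescale a F * (2 * (rescale a (exp A) - 1)) = C a * X * (rescale a (exp A) + 1) := by
  simpa [rescale_X, map_ofNat] using congrArg (rescale a) hF

theorem rescale_exp_mul_rescale_exp_of_add_eq {A : Type*} [CommRing A] [Algebra ℚ A]
    {a b c d : A} (h : a + b = c + d) :
    rescale a (exp A) * rescale b (exp A) = rescale c (exp A) * rescale d (exp A) := by
  rw [exp_mul_exp_eq_exp_add, exp_mul_exp_eq_exp_add, h]

theorem sF_ne_zero : sF ≠ 0 :=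
  fun h => MvPolynomial.X_ne_zero 0 (IsFractionRing.to_map_eq_zero_iff.mp h)

theorem tF_ne_zero : tF ≠ 0 :=
  fun h => MvPolynomial.X_ne_zero 1 (IsFractionRing.to_map_eq_zero_iff.mp h)

theorem C_mul_C_inv {K : Type*} [Field K] {a : K} (ha : a ≠ 0) : C a * C a⁻¹ = 1 := by
  rw [← map_mul, mul_inv_cancel₀ ha, map_one]

/-- Getzler's power-series identity: with `f(x) = x/(e^x-1) + x/2` (characterized by
`f·2(e^x-1) = x(e^x+1)`) and `A(s,t,x) = (f(x) - f(sx))·f(tx)/t`, one has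
`A(s,t,x) + A(t,s,x) = (x²/4)·{1 + 4e^x(e^{(s+t-1)x}-1)/((e^x-1)(e^{sx}-1)(e^{tx}-1))
- (s+t-1)(e^{sx}+1)(e^{tx}+1)/((e^{sx}-1)(e^{tx}-1))}`, stated in `ℚ(s,t)[[x]]` after
clearing the (non-invertible) denominator `D = (e^x-1)(e^{sx}-1)(e^{tx}-1)`. -/
theorem stmt_6 (f : PowerSeries ℚ)
    (hf : f * (2 * (PowerSeries.exp ℚ - 1)) = PowerSeries.X * (PowerSeries.exp ℚ + 1)) :
    (((PowerSeries.map (algebraMap ℚ Frac2) f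
        - PowerSeries.rescale sF (PowerSeries.map (algebraMap ℚ Frac2) f))
          * PowerSeries.rescale tF (PowerSeries.map (algebraMap ℚ Frac2) f)
          * PowerSeries.C tF⁻¹
      + (PowerSeries.map (algebraMap ℚ Frac2) f
        - PowerSeries.rescale tF (PowerSeries.map (algebraMap ℚ Frac2) f))
          * PowerSeries.rescale sF (PowerSeries.map (algebraMap ℚ Frac2) f)
          * PowerSeries.C sF⁻¹)
      * ((PowerSeries.exp Frac2 - 1) * (PowerSeries.rescale sF (PowerSeries.exp Frac2) - 1)
          * (PowerSeries.rescale tF (PowerSeries.exp Frac2) - 1)))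
    = PowerSeries.C (4 : Frac2)⁻¹ * PowerSeries.X ^ 2 *
      (((PowerSeries.exp Frac2 - 1) * (PowerSeries.rescale sF (PowerSeries.exp Frac2) - 1)
          * (PowerSeries.rescale tF (PowerSeries.exp Frac2) - 1))
        + 4 * PowerSeries.exp Frac2
            * (PowerSeries.rescale (sF + tF - 1) (PowerSeries.exp Frac2) - 1)
        - PowerSeries.C (sF + tF - 1)
            * (PowerSeries.rescale sF (PowerSeries.exp Frac2) + 1)
            * (PowerSeries.rescale tF (PowerSeries.exp Frac2) + 1)
            * (PowerSeries.exp Frac2 - 1)) := by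
  have hF : map (algebraMap ℚ Frac2) f * (2 * (exp Frac2 - 1)) = X * (exp Frac2 + 1) := by
    simpa [map_ofNat] using congrArg (map (algebraMap ℚ Frac2)) hf
  have hE : exp Frac2 * rescale (sF + tF - 1) (exp Frac2)
      = rescale sF (exp Frac2) * rescale tF (exp Frac2) := by
    simpa using rescale_exp_mul_rescale_exp_of_add_eq (A := Frac2) (a := 1) (b := sF + tF - 1)
      (c := sF) (d := tF) (by ring)
  have h4 : C (4 : Frac2)⁻¹ * 4 = 1 := by
    rw [← map_ofNat C 4, ← map_mul, inv_mul_cancel₀ (by norm_num), map_one]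
  have key := getzler_identity_of_relations hF (rescale_mul_two_mul_exp_sub_one hF sF)
    (rescale_mul_two_mul_exp_sub_one hF tF) hE
  rw [map_sub, map_add, map_one]
  convert add_eq_of_four_mul_add_eq (C_mul_C_inv sF_ne_zero) (C_mul_C_inv tF_ne_zero) h4 key
    using 1 <;> ring
end
end

section
/- With b_n = (-1)^n B_n/n!, for every even integer n > 2 the polynomial b_n ∑_{i=0}^{n-1} s^i + ∑_{k=2}^{n-2} b_k b_{n-k} (t^{k-1} - s^{n-k} t^{k-1}) is congruent, modulo the ideal generated by s + t - 1 in ℚ[s,t][t^{-1}], to ∑_{k=0}^{n} b_k b_{n-k} (1 - s^{n-k}) t^{k-1}. -/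
open Finset LaurentPolynomial

noncomputable section

/-- The Laurent polynomial ring `ℚ[s,t,t⁻¹]`, realized as Laurent polynomials in `t`
over `ℚ[s]`. -/
abbrev LRing : Type := LaurentPolynomial (Polynomial ℚ)

/-- The variable `s`. -/
def sL : LRing := LaurentPolynomial.C Polynomial.X

/-- The variable `t`. -/
def tL : LRing := LaurentPolynomial.T 1

/-- The scalar embedding `ℚ → ℚ[s,t,t⁻¹]`. -/
def cL (q : ℚ) : LRing := LaurentPolynomial.C (Polynomial.C q)

/-- `b_n = (-1)^n B_n / n!`. -/
def bG (n : ℕ) : ℚ := (-1) ^ n * bernoulli n / n.factorial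

/-
Proof idea: the terms `k = 1` and `k = n - 1` of the right-hand sum vanish because
`b_{n-1} = 0` for the odd index `n - 1 > 1`, the term `k = n` vanishes because
`1 - s^0 = 0`, and the terms `2 ≤ k ≤ n - 2` cancel against the left-hand sum. What remains
is `b_n (∑_{i<n} s^i - (1 - s^n) t⁻¹)`, which lies in the ideal since
`1 - s^n = (1 - s) ∑_{i<n} s^i ≡ t ∑_{i<n} s^i`.
-/

lemma bG_zero : bG 0 = 1 := by
  simp [bG]

lemma bG_eq_zero_of_odd {n : ℕ} (hodd : Odd n) (hn : 1 < n) : bG n = 0 := by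
  rw [bG, bernoulli_eq_bernoulli'_of_ne_one hn.ne', bernoulli'_eq_zero_of_odd hodd hn]
  simp

lemma Finset.sum_range_succ_eq_ends {M : Type*} [AddCommMonoid M] (f : ℕ → M) {n : ℕ}
    (hn : 3 ≤ n) :
    ∑ k ∈ range (n + 1), f k
      = f 0 + f 1 + ∑ k ∈ Icc 2 (n - 2), f k + f (n - 1) + f n := by
  obtain ⟨m, rfl⟩ : ∃ m, n = m + 3 := ⟨n - 3, by omega⟩
  rw [show m + 3 - 2 = m + 1 by omega, show m + 3 - 1 = m + 2 by omega,
    ← Ico_add_one_right_eq_Icc, sum_range_succ, sum_range_succ, range_eq_Ico,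
    sum_eq_sum_Ico_succ_bot (by omega), sum_eq_sum_Ico_succ_bot (by omega)]
  simp [add_assoc]

lemma geom_sum_sub_mul_inv_mem_span {R : Type*} [CommRing R] {s t u : R} (htu : t * u = 1)
    (n : ℕ) : ∑ i ∈ range n, s ^ i - (1 - s ^ n) * u ∈ Ideal.span {s + t - 1} := by
  rw [Ideal.mem_span_singleton']
  refine ⟨u * ∑ i ∈ range n, s ^ i, ?_⟩
  linear_combination u * geom_sum_mul s n + (∑ i ∈ range n, s ^ i) * htu

/-- For every even `n > 2`, the Laurent polynomial
`b_n ∑_{i=0}^{n-1} s^i + ∑_{k=2}^{n-2} b_k b_{n-k} (t^{k-1} - s^{n-k} t^{k-1})`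
is congruent, modulo the ideal `(s + t - 1)` of `ℚ[s,t,t⁻¹]`, to
`∑_{k=0}^{n} b_k b_{n-k} (1 - s^{n-k}) t^{k-1}`. -/
theorem stmt_7 (n : ℕ) (hn : 2 < n) (hev : Even n) :
    (cL (bG n) * ∑ i ∈ range n, sL ^ i
        + ∑ k ∈ Finset.Icc 2 (n - 2), cL (bG k * bG (n - k)) *
            (LaurentPolynomial.T ((k : ℤ) - 1)
              - sL ^ (n - k) * LaurentPolynomial.T ((k : ℤ) - 1)))
      - (∑ k ∈ range (n + 1), cL (bG k * bG (n - k)) *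
            ((1 - sL ^ (n - k)) * LaurentPolynomial.T ((k : ℤ) - 1)))
      ∈ Ideal.span {sL + tL - 1} := by
  have hb : bG (n - 1) = 0 :=
    bG_eq_zero_of_odd (Nat.Even.sub_odd (by omega) hev odd_one) (by omega)
  have htT : tL * T (-1) = 1 := by
    rw [tL, ← T_add, add_neg_cancel, T_zero]
  have hmid : ∀ k ∈ Icc 2 (n - 2), cL (bG k * bG (n - k)) * (T ((k : ℤ) - 1)
      - sL ^ (n - k) * T ((k : ℤ) - 1))
        = cL (bG k * bG (n - k)) * ((1 - sL ^ (n - k)) * T ((k : ℤ) - 1)) :=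
    fun k _ => by ring
  rw [sum_congr rfl hmid, sum_range_succ_eq_ends _ (by omega)]
  simp only [Nat.sub_zero, Nat.sub_self, Nat.sub_sub_self (by omega : 1 ≤ n), hb, bG_zero,
    Nat.cast_zero, Nat.cast_one, zero_sub, sub_self, pow_zero, mul_zero, zero_mul, one_mul,
    add_zero, cL, map_zero]
  convert Ideal.mul_mem_left _ (C (Polynomial.C (bG n)))
    (geom_sum_sub_mul_inv_mem_span htT n) using 1
  ring
end
end

section
/- Let L be a differential graded Lie algebra with L_i = 0 for i > 1. Then the bracket {f,g} = [δf, g] on L_1 is a Lie bracket: it is antisymmetric and satisfies the Jacobi identity, for f, g ∈ L_1. -/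
/-- Koszul's derived bracket: let `L` be a differential graded Lie algebra over `ℚ`
(carrier `V`, homogeneous components `H i`, degree `-1` differential `δ`, degree `0`
graded bracket `br`) with `L_i = 0` for `i > 1`.  Then `{f,g} = [δf, g]` is a Lie
bracket on `L_1`: it is antisymmetric and satisfies the Jacobi identity. -/
theorem stmt_10 (V : Type*) [AddCommGroup V] [Module ℚ V]
    (H : ℤ → Submodule ℚ V)
    (br : V →ₗ[ℚ] V →ₗ[ℚ] V) (δ : V →ₗ[ℚ] V)
    (hbr_mem : ∀ {i j : ℤ} {a b : V}, a ∈ H i → b ∈ H j → br a b ∈ H (i + j))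
    (hδ_mem : ∀ {i : ℤ} {a : V}, a ∈ H i → δ a ∈ H (i - 1))
    (hδδ : ∀ a : V, δ (δ a) = 0)
    (hanti : ∀ {i j : ℤ} {a b : V}, a ∈ H i → b ∈ H j →
      br a b = -((-1 : ℚ) ^ (i * j) • br b a))
    (hjac : ∀ {i j : ℤ} {a b : V}, a ∈ H i → b ∈ H j → ∀ c : V,
      br a (br b c) = br (br a b) c + (-1 : ℚ) ^ (i * j) • br b (br a c))
    (hleib : ∀ {i : ℤ} {a : V}, a ∈ H i → ∀ b : V,
      δ (br a b) = br (δ a) b + (-1 : ℚ) ^ i • br a (δ b))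
    (htriv : ∀ i : ℤ, 1 < i → H i = ⊥)
    (f g h : V) (hf : f ∈ H 1) (hg : g ∈ H 1) (hh : h ∈ H 1) :
    br (δ f) g = - br (δ g) f ∧
    br (δ f) (br (δ g) h) + br (δ g) (br (δ h) f) + br (δ h) (br (δ f) g) = 0 := by
  have hδ0 : ∀ {a : V}, a ∈ H 1 → δ a ∈ H 0 := fun {a} ha => by
    have := hδ_mem ha; norm_num at this; exact this
  -- antisymmetry of the derived bracket on H 1
  have anti1 : ∀ {a b : V}, a ∈ H 1 → b ∈ H 1 → br (δ a) b = - br (δ b) a := by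
    intro a b ha hb
    have h2 : br a b = 0 := by
      have := hbr_mem ha hb
      norm_num [htriv 2 (by norm_num)] at this
      simpa using this
    have hl := hleib ha b
    rw [h2, map_zero] at hl
    simp only [zpow_one, neg_smul, one_smul] at hl
    have h1 : br (δ a) b = br a (δ b) := by
      have := hl.symm
      rw [add_neg_eq_zero] at this
      exact this
    rw [h1, hanti ha (hδ0 hb)]
    norm_num
  -- the derived bracket lands in H 1
  have mem1 : ∀ {a b : V}, a ∈ H 1 → b ∈ H 1 → br (δ a) b ∈ H 1 := by
    intro a b ha hb
    have := hbr_mem (hδ0 ha) hb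
    simpa using this
  -- δ of the derived bracket is [δa, δb]
  have δbr : ∀ {a : V}, a ∈ H 1 → ∀ b : V, δ (br (δ a) b) = br (δ a) (δ b) := by
    intro a ha b
    have := hleib (hδ0 ha) b
    rw [hδδ a] at this
    simpa using this
  -- graded Jacobi for two degree-0 elements
  have jac0 : ∀ {a b : V}, a ∈ H 1 → b ∈ H 1 → ∀ c : V,
      br (δ a) (br (δ b) c) = br (δ (br (δ a) b)) c + br (δ b) (br (δ a) c) := by
    intro a b ha hb c
    have := hjac (hδ0 ha) (hδ0 hb) c
    rw [δbr ha b]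
    simpa using this
  refine ⟨anti1 hf hg, ?_⟩
  have e1 := jac0 hf hg h
  have e2 := jac0 hg hh f
  have e3 : br (δ h) (br (δ f) g) = - br (δ (br (δ f) g)) h := anti1 hh (mem1 hf hg)
  have e4 : br (δ g) (br (δ h) f) = br (δ (br (δ g) h)) f + br (δ h) (br (δ g) f) :=
    jac0 hg hh f
  have e5 : br (δ (br (δ g) h)) f = - br (δ f) (br (δ g) h) := anti1 (mem1 hg hh) hf
  have e6 : br (δ h) (br (δ g) f) = - br (δ h) (br (δ f) g) := by
    rw [anti1 hg hf, map_neg]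
  have e7 : br (δ f) (br (δ g) h) = br (δ (br (δ f) g)) h + br (δ g) (br (δ f) h) := jac0 hf hg h
  -- combine: sum = {f,{g,h}} + {g,{h,f}} + {h,{f,g}}
  rw [e4, e5, e6, e3]
  abel
end

section
/- Let L be a differential graded Lie algebra, D the operator equal to δ on L_1 and zero elsewhere, and define {a} = δa for |a| > 1, {a} = 0 for |a| = 1, and {a,b} = ½([Da,b] - (-1)^{|a|}[a,Db]) for a,b of positive degree. Then the 1st Jacobi rule holds: {{a,b}} + {{a},b} + (-1)^{|a||b|}{{b},a} = 0 (equivalently {{a,b}} + {{a},b} + (-1)^{|a|}{a,{b}} = 0) for all a, b of positive degree. -/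
section

variable {V : Type*} [AddCommGroup V] [Module ℚ V]

/-- The operator `D`: `δ` on elements of degree `1`, zero in other degrees.
The first argument is the degree of the element. -/
def Dop (δ : V →ₗ[ℚ] V) (m : ℤ) (x : V) : V := if m = 1 then δ x else 0

/-- The unary bracket `{a}` of Getzler's `L_∞`-structure: `δa` if `|a| > 1`, `0`
if `|a| = 1`.  The first argument is the degree of the element. -/
def sqop (δ : V →ₗ[ℚ] V) (m : ℤ) (x : V) : V := if 1 < m then δ x else 0

/-- The derived binary bracket `{a,b} = ½([Da,b] - (-1)^{|a|}[a,Db])`,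
for `a` of degree `m₁` and `b` of degree `m₂`. -/
def dbr (br : V →ₗ[ℚ] V →ₗ[ℚ] V) (δ : V →ₗ[ℚ] V) (m₁ m₂ : ℤ) (x y : V) : V :=
  (2⁻¹ : ℚ) • (br (Dop δ m₁ x) y - (-1 : ℚ) ^ m₁ • br x (Dop δ m₂ y))

/-- The 1st Jacobi rule for Getzler's brackets on the positive-degree part of a
differential graded Lie algebra over `ℚ`:
`{{a,b}} + {{a},b} + (-1)^{|a|}{a,{b}} = 0` for `a`, `b` of positive degree,
where `{c} = δc` for `|c| > 1` and `{c} = 0` for `|c| = 1`. -/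
theorem stmt_11 (V : Type*) [AddCommGroup V] [Module ℚ V]
    (H : ℤ → Submodule ℚ V)
    (br : V →ₗ[ℚ] V →ₗ[ℚ] V) (δ : V →ₗ[ℚ] V)
    (hbr_mem : ∀ {i j : ℤ} {a b : V}, a ∈ H i → b ∈ H j → br a b ∈ H (i + j))
    (hδ_mem : ∀ {i : ℤ} {a : V}, a ∈ H i → δ a ∈ H (i - 1))
    (hδδ : ∀ a : V, δ (δ a) = 0)
    (hanti : ∀ {i j : ℤ} {a b : V}, a ∈ H i → b ∈ H j →
      br a b = -((-1 : ℚ) ^ (i * j) • br b a))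
    (hjac : ∀ {i j : ℤ} {a b : V}, a ∈ H i → b ∈ H j → ∀ c : V,
      br a (br b c) = br (br a b) c + (-1 : ℚ) ^ (i * j) • br b (br a c))
    (hleib : ∀ {i : ℤ} {a : V}, a ∈ H i → ∀ b : V,
      δ (br a b) = br (δ a) b + (-1 : ℚ) ^ i • br a (δ b))
    (i j : ℤ) (hi : 0 < i) (hj : 0 < j)
    (a b : V) (ha : a ∈ H i) (hb : b ∈ H j) :
    sqop δ (i + j - 1) (dbr br δ i j a b)
      + dbr br δ (i - 1) j (sqop δ i a) b
      + (-1 : ℚ) ^ i • dbr br δ i (j - 1) a (sqop δ j b) = 0 := by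
  have hD1 : ∀ x : V, Dop δ 1 x = δ x := fun x => if_pos rfl
  have hDne : ∀ m : ℤ, m ≠ 1 → ∀ x : V, Dop δ m x = 0 := fun m h x => if_neg h
  have hsq1 : ∀ x : V, sqop δ 1 x = 0 := fun x => if_neg (by norm_num)
  obtain rfl | hi1 := (by omega : i = 1 ∨ 1 < i) <;>
    obtain rfl | hj1 := (by omega : j = 1 ∨ 1 < j)
  · simp [sqop, dbr, Dop]
  · have hj' : j ≠ 1 := hj1.ne'
    have h1 : (1:ℤ) + j - 1 = j := by ring
    have hD : Dop δ (j-1) (δ b) = 0 := by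
      unfold Dop; split <;> simp [hδδ]
    simp only [h1, dbr, hD1, hDne j hj', hD, hsq1, sqop, if_pos hj1,
      if_neg (by norm_num : ¬ (1:ℤ) < 1), map_zero, smul_zero, sub_zero,
      LinearMap.map_smul, LinearMap.zero_apply, LinearMap.smul_apply]
    simp only [map_smul, map_sub, map_zero, hleib (hδ_mem ha) b, hδδ]
    simp only [hδδ, map_zero, LinearMap.zero_apply, hDne 0 (by norm_num),
      show (1:ℤ) - 1 = 0 from by norm_num, zpow_zero, one_smul, zero_add,
      zpow_one]
    module
  · have hi' : i ≠ 1 := hi1.ne'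
    have h1 : i + 1 - 1 = i := by ring
    have key : ((-1:ℚ))^(i-1) = -(-1:ℚ)^i := by
      rw [zpow_sub₀ (by norm_num : (-1:ℚ) ≠ 0)]; simp [div_neg]
    have hD : Dop δ (i-1) (δ a) = 0 := by
      unfold Dop; split <;> simp [hδδ]
    simp only [h1, dbr, hD1, hDne i hi', hDne 0 (by norm_num), hD, hsq1, sqop,
      if_pos hi1, map_zero, smul_zero, sub_zero, zero_sub,
      LinearMap.zero_apply, LinearMap.map_zero]
    simp only [map_smul, map_sub, map_neg, map_zero, hleib ha (δ b), hδδ, key,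
      smul_zero, add_zero, zero_sub, if_neg (by norm_num : ¬ (1:ℤ) < 1),
      hDne (1-1) (by norm_num), neg_zero]
    module
  · have hi' : i ≠ 1 := hi1.ne'
    have hj' : j ≠ 1 := hj1.ne'
    have hDa : Dop δ (i-1) (δ a) = 0 := by
      unfold Dop; split <;> simp [hδδ]
    have hDb : Dop δ (j-1) (δ b) = 0 := by
      unfold Dop; split <;> simp [hδδ]
    simp only [dbr, hDne i hi', hDne j hj', hDa, hDb, sqop, if_pos hi1, if_pos hj1,
      map_zero, smul_zero, sub_zero, zero_sub, LinearMap.zero_apply,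
      LinearMap.map_zero, sub_self, smul_neg, neg_zero, add_zero]
    simp

end
end

section
/- Suppose (Z_{i,j}) is a family of elements of a ℚ-vector space indexed by pairs i,j ≥ 0 with i + j < n, satisfying Z_{j,k} = Z_{k,j} and Z_{j,k} = Z_{j+1,k} + Z_{j,k+1} whenever j + k + 1 < n. If f(s,t) = ∑_{i,j} a_{ij} s^i t^j ∈ ℚ[s,t] (with a_{ij} = 0 for i + j ≥ n) satisfies f(s,t) + f(t,s) ∈ (s + t - 1), then ∑_{i,j} a_{ij} Z_{i,j} = 0. -/
/-!
Pascal's rule `W i j = W (i+1) j + W i (j+1)` says exactly that the linear functional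
`s^i t^j ↦ W i j` on `R[s,t]` kills the ideal `(s + t - 1)`. The family `Z` satisfies the rule
only below level `n`, but reading the rule backwards (`W (i+1) j = W i j - W i (j+1)`, with
arbitrary values on the axis `i = 0`) extends it to all of `ℕ × ℕ` without changing it below
level `n`. Applying the resulting functional to `f(s,t) + f(t,s)` gives, by the symmetry of `Z`
and the support condition on `a`, twice the sum in question.
-/

open Finset MvPolynomial

section PascalFunctional

variable {R M : Type*} [CommRing R] [AddCommGroup M] [Module R M]

variable (R) in
noncomputable def pascalFunctional (W : ℕ → ℕ → M) : MvPolynomial (Fin 2) R →ₗ[R] M :=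
  (basisMonomials (Fin 2) R).constr R fun d => W (d 0) (d 1)

variable (W : ℕ → ℕ → M)

theorem pascalFunctional_monomial (d : Fin 2 →₀ ℕ) (c : R) :
    pascalFunctional R W (monomial d c) = c • W (d 0) (d 1) := by
  have : monomial d c = c • basisMonomials (Fin 2) R d := by
    rw [coe_basisMonomials, smul_monomial, smul_eq_mul, mul_one]
  rw [this, map_smul, pascalFunctional, Module.Basis.constr_basis]

theorem pascalFunctional_C_mul_X_pow_mul_X_pow (c : R) (i j : ℕ) :
    pascalFunctional R W (C c * X 0 ^ i * X 1 ^ j) = c • W i j := by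
  rw [C_mul_X_pow_eq_monomial, X_pow_eq_monomial, monomial_mul, mul_one,
    pascalFunctional_monomial]
  simp

theorem pascalFunctional_C_mul_X_pow_mul_X_pow_swap (c : R) (i j : ℕ) :
    pascalFunctional R W (C c * X 1 ^ i * X 0 ^ j) = c • W j i := by
  rw [mul_right_comm, pascalFunctional_C_mul_X_pow_mul_X_pow]

theorem pascalFunctional_mul_X_add_X_sub_one
    (hW : ∀ i j, W i j = W (i + 1) j + W i (j + 1)) (g : MvPolynomial (Fin 2) R) :
    pascalFunctional R W (g * (X 0 + X 1 - 1)) = 0 := by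
  suffices pascalFunctional R W ∘ₗ LinearMap.mulRight R (X 0 + X 1 - 1) = 0 from
    LinearMap.congr_fun this g
  refine (basisMonomials (Fin 2) R).ext fun d => ?_
  simp only [coe_basisMonomials, LinearMap.comp_apply, LinearMap.mulRight_apply,
    LinearMap.zero_apply, mul_sub, mul_add, mul_one, X, monomial_mul, map_add, map_sub,
    pascalFunctional_monomial, one_smul]
  simp [hW (d 0) (d 1)]

theorem pascalFunctional_eq_zero_of_mem_span
    (hW : ∀ i j, W i j = W (i + 1) j + W i (j + 1)) {p : MvPolynomial (Fin 2) R}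
    (hp : p ∈ Ideal.span {X 0 + X 1 - 1}) : pascalFunctional R W p = 0 := by
  obtain ⟨g, rfl⟩ := Ideal.mem_span_singleton'.mp hp
  exact pascalFunctional_mul_X_add_X_sub_one W hW g

end PascalFunctional

section PascalExtension

variable {M : Type*} [AddCommGroup M] (n : ℕ) (Z : ℕ → ℕ → M)

def pascalExtension : ℕ → ℕ → M
  | 0, j => if j < n then Z 0 j else 0
  | i + 1, j =>
    if i + 1 + j < n then Z (i + 1) j else pascalExtension i j - pascalExtension i (j + 1)

theorem pascalExtension_of_lt {i j : ℕ} (h : i + j < n) : pascalExtension n Z i j = Z i j := by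
  cases i <;> simp_all [pascalExtension]

theorem pascalExtension_pascal
    (hpascal : ∀ j k : ℕ, j + k + 1 < n → Z j k = Z (j + 1) k + Z j (k + 1)) (i j : ℕ) :
    pascalExtension n Z i j =
      pascalExtension n Z (i + 1) j + pascalExtension n Z i (j + 1) := by
  by_cases h : i + j + 1 < n
  · rw [pascalExtension_of_lt n Z (by omega), pascalExtension_of_lt n Z (by omega),
      pascalExtension_of_lt n Z (by omega)]
    exact hpascal i j h
  · rw [pascalExtension, if_neg (by omega)]
    abel

end PascalExtension

/-- Abstract form of Getzler's Corollary 3: if `(Z_{i,j})_{i+j<n}` in a `ℚ`-vector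
space satisfies `Z_{j,k} = Z_{k,j}` and `Z_{j,k} = Z_{j+1,k} + Z_{j,k+1}` whenever
`j + k + 1 < n`, and `f(s,t) = ∑ a_{ij} s^i t^j` (with `a_{ij} = 0` for `i + j ≥ n`)
satisfies `f(s,t) + f(t,s) ∈ (s + t - 1)`, then `∑ a_{ij} Z_{i,j} = 0`. -/
theorem stmt_15 (M : Type*) [AddCommGroup M] [Module ℚ M] (n : ℕ)
    (Z : ℕ → ℕ → M)
    (hsym : ∀ j k : ℕ, j + k < n → Z j k = Z k j)
    (hpascal : ∀ j k : ℕ, j + k + 1 < n → Z j k = Z (j + 1) k + Z j (k + 1))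
    (a : ℕ → ℕ → ℚ) (hsupp : ∀ i j : ℕ, n ≤ i + j → a i j = 0)
    (hideal :
      (∑ i ∈ range n, ∑ j ∈ range n,
          C (a i j) * X (0 : Fin 2) ^ i * X 1 ^ j) +
        (∑ i ∈ range n, ∑ j ∈ range n,
          C (a i j) * X (1 : Fin 2) ^ i * X 0 ^ j)
        ∈ Ideal.span {(X 0 + X 1 - 1 : MvPolynomial (Fin 2) ℚ)}) :
    ∑ i ∈ range n, ∑ j ∈ range n, a i j • Z i j = 0 := by
  have hzero := pascalFunctional_eq_zero_of_mem_span _ (pascalExtension_pascal n Z hpascal) hideal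
  have hW (i j : ℕ) : a i j • pascalExtension n Z i j = a i j • Z i j := by
    by_cases h : i + j < n
    · rw [pascalExtension_of_lt n Z h]
    · rw [hsupp i j (by omega), zero_smul, zero_smul]
  have hswap (i j : ℕ) : a i j • pascalExtension n Z j i = a i j • Z i j := by
    by_cases h : i + j < n
    · rw [pascalExtension_of_lt n Z (by omega), hsym i j h]
    · rw [hsupp i j (by omega), zero_smul, zero_smul]
  simp only [map_add, map_sum, pascalFunctional_C_mul_X_pow_mul_X_pow,
    pascalFunctional_C_mul_X_pow_mul_X_pow_swap, hW, hswap] at hzero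
  rwa [← two_smul ℚ, smul_eq_zero, or_iff_right two_ne_zero] at hzero
end
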